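/- If g ∈ F and c ∈ ℝ satisfy Δ g = c • (p_1 * p_2 * ⋯ * p_n), then c = 0; hence the Δ-cohomology class of p_1⋯p_n is nonzero and, combined with the existence statement, the cohomology of the Batalin–Vilkovisky operator Δ on the polynomial model of a contractible patch is isomorphic to ℝ. -/

import Mathlib

open TensorProduct ExteriorAlgebra MvPolynomial

set_option synthInstance.maxHeartbeats 1000000
set_option maxHeartbeats 1000000

noncomputable section

/-- The coefficient algebra `F`. -/
abbrev Coef (n : ℕ) := MvPolynomial (Fin n) ℝ ⊗[ℝ] ExteriorAlgebra ℝ (Fin n → ℝ)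

/-- The operator `∂/∂p_k` on the exterior factor of `F`: left contraction with the
dual-basis functional of `Pi.single k 1`. -/
def pderC (n : ℕ) (k : Fin n) :
    ExteriorAlgebra ℝ (Fin n → ℝ) →ₗ[ℝ] ExteriorAlgebra ℝ (Fin n → ℝ) :=
  CliffordAlgebra.contractLeft (LinearMap.proj k)

/-- The Batalin–Vilkovisky operator `Δ = ∑ₖ ∂²/∂x_k∂p_k` on `F`. -/
def bv (n : ℕ) : Coef n →ₗ[ℝ] Coef n :=
  ∑ k : Fin n, TensorProduct.map (MvPolynomial.pderiv k).toLinearMap LinearMap.id ∘ₗ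
      TensorProduct.map LinearMap.id (pderC n k)

/-- The element `p_1 * p_2 * ⋯ * p_n` of `F`. -/
def pVol (n : ℕ) : Coef n :=
  (List.ofFn (fun i : Fin n => (1 : MvPolynomial (Fin n) ℝ) ⊗ₜ ι ℝ (Pi.single i (1 : ℝ)))).prod


/-! The linear functional "evaluate at `x = 0`, then take the Berezin integral `∫ dp_n ⋯ dp_1`"
vanishes on the image of every `∂/∂p_k`, because contractions anticommute and square to zero;
hence it vanishes on the image of `Δ`. It takes the value `1` on `p_1 ⋯ p_n`, so no nonzero
multiple of `p_1 ⋯ p_n` is `Δ`-exact. -/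

namespace CliffordAlgebra

variable {R M : Type*} [CommRing R] [AddCommGroup M] [Module R M] {Q : QuadraticForm R M}

def contractLeftList : List (Module.Dual R M) → Module.End R (CliffordAlgebra Q)
  | [] => LinearMap.id
  | d :: ds => contractLeftList ds ∘ₗ contractLeft d

theorem contractLeftList_contractLeft_of_mem {ds : List (Module.Dual R M)}
    {d : Module.Dual R M} (hd : d ∈ ds) (x : CliffordAlgebra Q) :
    contractLeftList ds (contractLeft d x) = 0 := by
  induction ds generalizing x with
  | nil => cases hd
  | cons d' ds ih =>
    rcases List.mem_cons.mp hd with rfl | hd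
    · simp [contractLeftList, contractLeft_contractLeft]
    · simp [contractLeftList, contractLeft_comm d' d, ih hd]

theorem contractLeft_prod_map_ι_of_forall {d : Module.Dual R M} {vs : List M}
    (hvs : ∀ v ∈ vs, d v = 0) : contractLeft d (vs.map (ι Q)).prod = 0 := by
  induction vs with
  | nil => exact contractLeft_one Q d
  | cons v vs ih =>
    rw [List.map_cons, List.prod_cons, contractLeft_ι_mul, hvs v List.mem_cons_self,
      ih fun w hw => hvs w (List.mem_cons_of_mem v hw), zero_smul, mul_zero, sub_zero]

theorem contractLeftList_map_coord_prod_map_ι {κ : Type*} (b : Module.Basis κ R M)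
    {l : List κ} (hl : l.Nodup) :
    contractLeftList (Q := Q) (l.map b.coord) (l.map (ι Q ∘ b)).prod = 1 := by
  induction l with
  | nil => rfl
  | cons i l ih =>
    obtain ⟨hil, hl⟩ := List.nodup_cons.mp hl
    have hcoord : ∀ v ∈ l.map b, b.coord i v = 0 := by
      simp only [List.mem_map, forall_exists_index, and_imp, forall_apply_eq_imp_iff₂]
      exact fun j hj => by simp [ne_of_mem_of_not_mem hj hil]
    rw [List.map_cons, List.map_cons, List.prod_cons, contractLeftList, LinearMap.comp_apply,
      Function.comp_apply, contractLeft_ι_mul, ← List.map_map,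
      contractLeft_prod_map_ι_of_forall hcoord, mul_zero, sub_zero, Module.Basis.coord_apply,
      Module.Basis.repr_self, Finsupp.single_eq_same, one_smul, List.map_map]
    exact ih hl

end CliffordAlgebra

namespace ExteriorAlgebra

open CliffordAlgebra

variable {R M : Type*} [CommRing R] [AddCommGroup M] [Module R M] {n : ℕ}

/-- The Berezin integral `∫ dp_n ⋯ dp_1` with respect to the basis `p_i = b i`. -/
def berezin (b : Module.Basis (Fin n) R M) : ExteriorAlgebra R M →ₗ[R] R :=
  algebraMapInv.toLinearMap ∘ₗ contractLeftList ((List.finRange n).map b.coord)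

theorem berezin_contractLeft_coord (b : Module.Basis (Fin n) R M) (k : Fin n)
    (x : ExteriorAlgebra R M) : berezin b (contractLeft (b.coord k) x) = 0 := by
  rw [berezin, LinearMap.comp_apply,
    contractLeftList_contractLeft_of_mem (List.mem_map_of_mem (List.mem_finRange k)),
    AlgHom.toLinearMap_apply, map_zero]

theorem berezin_prod_ι (b : Module.Basis (Fin n) R M) :
    berezin b (List.ofFn fun i => ι R (b i)).prod = 1 := by
  rw [berezin, LinearMap.comp_apply, List.ofFn_eq_map, ← Function.comp_def (ι R),
    contractLeftList_map_coord_prod_map_ι b (List.nodup_finRange n)]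
  exact map_one algebraMapInv

end ExteriorAlgebra

open CliffordAlgebra in
theorem pderC_eq_contractLeft_coord (n : ℕ) (k : Fin n) :
    pderC n k = contractLeft ((Pi.basisFun ℝ (Fin n)).coord k) :=
  congrArg contractLeft (LinearMap.ext fun x => (Pi.basisFun_repr ℝ (Fin n) x k).symm)

def berezinAtZero (n : ℕ) : Coef n →ₗ[ℝ] ℝ :=
  (TensorProduct.lid ℝ ℝ).toLinearMap ∘ₗ
    TensorProduct.map (lcoeff ℝ 0) (berezin (Pi.basisFun ℝ (Fin n)))

theorem berezinAtZero_bv (n : ℕ) (g : Coef n) : berezinAtZero n (bv n g) = 0 := by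
  induction g using TensorProduct.induction_on with
  | zero => simp
  | tmul f x => simp [bv, berezinAtZero, pderC_eq_contractLeft_coord, berezin_contractLeft_coord]
  | add g g' hg hg' => rw [map_add, map_add, hg, hg', add_zero]

theorem berezinAtZero_pVol (n : ℕ) : berezinAtZero n (pVol n) = 1 := by
  have hpVol : pVol n = 1 ⊗ₜ (List.ofFn fun i => ι ℝ (Pi.basisFun ℝ (Fin n) i)).prod := by
    simp only [pVol, Pi.basisFun_apply, ← Algebra.TensorProduct.includeRight_apply]
    rw [map_list_prod, List.map_ofFn, Function.comp_def]
  rw [hpVol, berezinAtZero, LinearMap.comp_apply, map_tmul, berezin_prod_ι]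
  simp

theorem bv_class_nonzero_general (n : ℕ) (g : Coef n) (c : ℝ)
    (h : bv n g = c • pVol n) :
    c = 0 := by
  have hres := congrArg (berezinAtZero n) h
  rwa [berezinAtZero_bv, map_smul, berezinAtZero_pVol, smul_eq_mul, mul_one, eq_comm] at hres

/-- If `g ∈ F` and `c ∈ ℝ` satisfy `Δ g = c • (p_1 * p_2 * ⋯ * p_n)`, then
`c = 0`; hence the `Δ`-cohomology class of `p_1⋯p_n` is nonzero. -/
theorem bv_class_nonzero (n : ℕ) (hn : 1 ≤ n) (g : Coef n) (c : ℝ)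
    (h : bv n g = c • pVol n) :
    c = 0 :=
  bv_class_nonzero_general n g c h
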